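/- arXiv:1907.09212 — 2 statements merged into one kernel-verified Lean document; each statement's English description precedes it below -/
import Mathlib

section
/- Let α be a type of atoms, let G be a ground program over α in which every rule has a finite positive body, and let E ⊆ G be an embedding program for G. Then G and E have the same answer sets: AS(G) = AS(E). -/
structure GroundRule (α : Type*) where
  head : Set α
  posBody : Set α
  negBody : Set α

namespace GroundRule

variable {α : Type*}

/-- `Heads R` is the set of all head atoms of rules in `R`. -/
def Heads (R : Set (GroundRule α)) : Set α := ⋃ r ∈ R, r.head

/-- `R` body-embeds `r` (written `R ⊢_b r`). -/
def BodyEmbeds (R : Set (GroundRule α)) (r : GroundRule α) : Prop :=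
  ∀ a ∈ r.posBody, ∃ r' ∈ R, a ∈ r'.head

/-- `R` embeds `r` (written `R ⊢ r`): either `R` does not body-embed `r`,
or `R` head-embeds `r` (i.e. `r ∈ R`). -/
def Embeds (R : Set (GroundRule α)) (r : GroundRule α) : Prop :=
  ¬ BodyEmbeds R r ∨ r ∈ R

/-- `E` is an embedding program for the ground program `G`. -/
def IsEmbeddingProgram (G E : Set (GroundRule α)) : Prop :=
  E ⊆ G ∧ ∀ r ∈ G, Embeds E r

/-- The fact rule `a.` for an atom `a`. -/
def factRule (a : α) : GroundRule α := ⟨{a}, ∅, ∅⟩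

/-- `factRules F` is the set of fact rules `{a. : a ∈ F}`. -/
def factRules (F : Set α) : Set (GroundRule α) := factRule '' F

/-- The instantiation operator `Inst(P, S) = {r ∈ P : B⁺(r) ⊆ S}`. -/
def Inst (P : Set (GroundRule α)) (S : Set α) : Set (GroundRule α) :=
  {r ∈ P | r.posBody ⊆ S}

/-- Interpretation `I` satisfies the body of `r`. -/
def SatBody (I : Set α) (r : GroundRule α) : Prop :=
  r.posBody ⊆ I ∧ r.negBody ∩ I = ∅

/-- Interpretation `I` satisfies the rule `r`. -/
def SatRule (I : Set α) (r : GroundRule α) : Prop :=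
  ¬ SatBody I r ∨ (r.head ∩ I).Nonempty

/-- `I` is a model of the ground program `G`. -/
def IsModel (I : Set α) (G : Set (GroundRule α)) : Prop :=
  ∀ r ∈ G, SatRule I r

/-- FLP reduct `G^I = {r ∈ G : I ⊨ B(r)}`. -/
def reduct (G : Set (GroundRule α)) (I : Set α) : Set (GroundRule α) :=
  {r ∈ G | SatBody I r}

/-- `A` is an answer set of `G`: `A` is a model of `G^A` minimal w.r.t. `⊆`. -/
def IsAnswerSet (G : Set (GroundRule α)) (A : Set α) : Prop :=
  IsModel A (reduct G A) ∧ ∀ B, B ⊂ A → ¬ IsModel B (reduct G A)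

/-- `AS G` is the set of all answer sets of `G`. -/
def AS (G : Set (GroundRule α)) : Set (Set α) := {A | IsAnswerSet G A}

theorem Heads_mono {R R' : Set (GroundRule α)} (h : R ⊆ R') : Heads R ⊆ Heads R' := by
  intro a ha
  simp only [Heads, Set.mem_iUnion, exists_prop] at ha ⊢
  obtain ⟨r, hr, har⟩ := ha
  exact ⟨r, h hr, har⟩

/-- The monotone operator `R ↦ Inst(P, Heads(R) ∪ F)`. -/
def InstOp (P : Set (GroundRule α)) (F : Set α) :
    Set (GroundRule α) →o Set (GroundRule α) where
  toFun R := Inst P (Heads R ∪ F)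
  monotone' := fun _ _ h _ hr =>
    ⟨hr.1, hr.2.trans (Set.union_subset_union_left F (Heads_mono h))⟩

/-- `Inst^∞(P, F)`: the least fixpoint of `R ↦ Inst(P, Heads(R) ∪ F)`. -/
def InstInf (P : Set (GroundRule α)) (F : Set α) : Set (GroundRule α) :=
  OrderHom.lfp (InstOp P F)

end GroundRule

open GroundRule

/-!
Every answer set `A` of `G` or of `E` lies inside the heads of `E`: otherwise `A ∩ Heads E` would be a
smaller model of the reduct, since any rule whose positive body is derivable from `E` belongs to `E`.
For such `A` every rule of `G^A` has its positive body in `Heads E`, hence lies in `E`, so the reducts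
`G^A` and `E^A` coincide, and with them the answer-set conditions.
-/

namespace GroundRule

variable {α : Type*}

lemma mem_Heads {R : Set (GroundRule α)} {a : α} : a ∈ Heads R ↔ ∃ r ∈ R, a ∈ r.head := by
  simp [Heads]

lemma bodyEmbeds_iff_posBody_subset_Heads {R : Set (GroundRule α)} {r : GroundRule α} :
    BodyEmbeds R r ↔ r.posBody ⊆ Heads R :=
  forall₂_congr fun _ _ => mem_Heads.symm

lemma IsEmbeddingProgram.mem_of_posBody_subset_Heads {G E : Set (GroundRule α)}
    (hE : IsEmbeddingProgram G E) {r : GroundRule α} (hr : r ∈ G)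
    (hbody : r.posBody ⊆ Heads E) : r ∈ E :=
  (hE.2 r hr).resolve_left fun h => h (bodyEmbeds_iff_posBody_subset_Heads.2 hbody)

lemma IsAnswerSet.subset_Heads {P E : Set (GroundRule α)} {A : Set α} (hA : IsAnswerSet P A)
    (hclosed : ∀ r ∈ reduct P A, r.posBody ⊆ Heads E → r ∈ E) : A ⊆ Heads E := by
  have hmodel : IsModel (A ∩ Heads E) (reduct P A) := by
    intro r hr
    by_cases hbody : SatBody (A ∩ Heads E) r
    swap
    · exact Or.inl hbody
    right
    have hrE : r ∈ E := hclosed r hr (hbody.1.trans Set.inter_subset_right)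
    obtain ⟨b, hb_head, hbA⟩ := (hA.1 r hr).resolve_left (not_not.2 hr.2)
    exact ⟨b, hb_head, hbA, mem_Heads.2 ⟨r, hrE, hb_head⟩⟩
  by_contra hsub
  exact hA.2 _ ⟨Set.inter_subset_left, fun h => hsub fun a ha => (h ha).2⟩ hmodel

lemma IsEmbeddingProgram.reduct_eq {G E : Set (GroundRule α)} (hE : IsEmbeddingProgram G E)
    {A : Set α} (hA : A ⊆ Heads E) : reduct G A = reduct E A :=
  Set.Subset.antisymm
    (fun _ hr => ⟨hE.mem_of_posBody_subset_Heads hr.1 (hr.2.1.trans hA), hr.2⟩)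
    (fun _ hr => ⟨hE.1 hr.1, hr.2⟩)

end GroundRule

theorem embedding_equivalence_general {α : Type*} (G E : Set (GroundRule α))
    (hE : IsEmbeddingProgram G E) :
    AS G = AS E := by
  have hiff : ∀ A, A ⊆ Heads E → (IsAnswerSet G A ↔ IsAnswerSet E A) := by
    intro A hA
    simp only [IsAnswerSet, hE.reduct_eq hA]
  ext A
  constructor
  · intro hA
    exact (hiff A (hA.subset_Heads fun _ hr => hE.mem_of_posBody_subset_Heads hr.1)).1 hA
  · intro hA
    exact (hiff A (hA.subset_Heads fun _ hr _ => hr.1)).2 hA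

/-- a ground program `G` with finite positive bodies and any
embedding program `E` for `G` have the same answer sets. -/
theorem embedding_equivalence {α : Type*} (G E : Set (GroundRule α))
    (hfin : ∀ r ∈ G, r.posBody.Finite)
    (hE : IsEmbeddingProgram G E) :
    AS G = AS E :=
  embedding_equivalence_general G E hE
end

section
/- Let α be a type of atoms and let G be a ground program over α in which every rule has a finite positive body. Let ES denote the collection of all embedding programs for G. Then AS(G) = AS(⋂_{E ∈ ES} E), i.e., G has the same answer sets as the intersection of all its embedding programs. -/
open GroundRule

/-!
Every embedding program `E ⊆ G` has the same answer sets as `G`, and the intersection of all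
embedding programs is again one. If `A` is an answer set of `G` or of `E`, then `A ⊆ Heads E`:
for `G` because `A ∩ Heads E` is already a model of `G^A`, for `E` because every atom of a minimal
model is the head of a rule of the reduct. So every rule of `G^A` has its positive body inside
`Heads E`, is body-embedded by `E` and therefore belongs to `E`; hence `E^A = G^A`.
-/

namespace GroundRule

variable {α : Type*} {G E R : Set (GroundRule α)} {A S : Set α} {r : GroundRule α}

theorem head_subset_heads (hr : r ∈ R) : r.head ⊆ Heads R :=
  Set.subset_biUnion_of_mem (u := head) hr

theorem bodyEmbeds_iff_posBody_subset_heads : BodyEmbeds R r ↔ r.posBody ⊆ Heads R := by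
  simp only [BodyEmbeds, Heads, Set.subset_def, Set.mem_iUnion, exists_prop]

theorem BodyEmbeds.mono (h : R ⊆ E) (hb : BodyEmbeds R r) : BodyEmbeds E r := fun a ha =>
  let ⟨r', hr', har'⟩ := hb a ha
  ⟨r', h hr', har'⟩

theorem IsEmbeddingProgram.mem_of_bodyEmbeds (hE : IsEmbeddingProgram G E) (hr : r ∈ G)
    (hb : BodyEmbeds E r) : r ∈ E :=
  (hE.2 r hr).resolve_left (not_not_intro hb)

theorem isEmbeddingProgram_self (G : Set (GroundRule α)) : IsEmbeddingProgram G G :=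
  ⟨subset_rfl, fun _ hr => Or.inr hr⟩

theorem isEmbeddingProgram_sInter (G : Set (GroundRule α)) :
    IsEmbeddingProgram G (⋂₀ {E | IsEmbeddingProgram G E}) := by
  refine ⟨Set.sInter_subset_of_mem (isEmbeddingProgram_self G), fun r hr => ?_⟩
  by_cases hb : BodyEmbeds (⋂₀ {E | IsEmbeddingProgram G E}) r
  · exact Or.inr fun E hE => hE.mem_of_bodyEmbeds hr (hb.mono (Set.sInter_subset_of_mem hE))
  · exact Or.inl hb

theorem IsEmbeddingProgram.reduct_subset (hE : IsEmbeddingProgram G E) (hA : A ⊆ Heads E) :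
    reduct G A ⊆ E := fun _ hr =>
  hE.mem_of_bodyEmbeds hr.1 (bodyEmbeds_iff_posBody_subset_heads.2 (hr.2.1.trans hA))

theorem reduct_eq_of_subset (hEG : E ⊆ G) (hGE : reduct G A ⊆ E) : reduct E A = reduct G A :=
  subset_antisymm (fun _ hr => ⟨hEG hr.1, hr.2⟩) fun _ hr => ⟨hGE hr, hr.2⟩

theorem isAnswerSet_iff_of_reduct_eq (h : reduct E A = reduct G A) :
    IsAnswerSet E A ↔ IsAnswerSet G A := by
  rw [IsAnswerSet, IsAnswerSet, h]

/-- Under `hS`, `A ∩ S` is a model of the reduct, so minimality of `A` forces `A ⊆ S`. -/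
theorem IsAnswerSet.subset_of_head_subset (hA : IsAnswerSet G A)
    (hS : ∀ r ∈ reduct G A, SatBody (A ∩ S) r → r.head ⊆ S) : A ⊆ S := by
  have hmodel : IsModel (A ∩ S) (reduct G A) := by
    intro r hr
    by_cases hsat : SatBody (A ∩ S) r
    · obtain ⟨x, hxr, hxA⟩ := (hA.1 r hr).resolve_left (not_not_intro hr.2)
      exact Or.inr ⟨x, hxr, hxA, hS r hr hsat hxr⟩
    · exact Or.inl hsat
  by_contra hAS
  exact hA.2 _ (Set.inter_subset_left.ssubset_of_ne fun h => hAS (h ▸ Set.inter_subset_right))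
    hmodel

theorem IsAnswerSet.subset_heads_reduct (hA : IsAnswerSet G A) : A ⊆ Heads (reduct G A) :=
  hA.subset_of_head_subset fun _ hr _ => head_subset_heads hr

theorem IsAnswerSet.subset_heads (hA : IsAnswerSet G A) (hE : IsEmbeddingProgram G E) :
    A ⊆ Heads E :=
  hA.subset_of_head_subset fun _ hr hsat =>
    head_subset_heads <| hE.mem_of_bodyEmbeds hr.1 <|
      bodyEmbeds_iff_posBody_subset_heads.2 (hsat.1.trans Set.inter_subset_right)

theorem IsEmbeddingProgram.answerSets_eq (hE : IsEmbeddingProgram G E) : AS G = AS E := by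
  ext A
  constructor
  · intro hA
    have hAE : A ⊆ Heads E := IsAnswerSet.subset_heads hA hE
    exact (isAnswerSet_iff_of_reduct_eq (reduct_eq_of_subset hE.1 (hE.reduct_subset hAE))).2 hA
  · intro hA
    have hAE : A ⊆ Heads E :=
      (IsAnswerSet.subset_heads_reduct hA).trans (Heads_mono fun _ hr => hr.1)
    exact (isAnswerSet_iff_of_reduct_eq (reduct_eq_of_subset hE.1 (hE.reduct_subset hAE))).1 hA

end GroundRule

theorem answerSets_eq_sInter_embeddings_general {α : Type*} (G : Set (GroundRule α)) :
    AS G = AS (⋂₀ {E | IsEmbeddingProgram G E}) :=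
  (isEmbeddingProgram_sInter G).answerSets_eq

/-- `G` has the same answer sets as the intersection of all its
embedding programs. -/
theorem answerSets_eq_sInter_embeddings {α : Type*} (G : Set (GroundRule α))
    (hfin : ∀ r ∈ G, r.posBody.Finite) :
    AS G = AS (⋂₀ {E | IsEmbeddingProgram G E}) :=
  answerSets_eq_sInter_embeddings_general G
end
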